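/- Consequence of the Virial theorem: if H is self-adjoint, A is bounded self-adjoint with Aψ ∈ D(H) for every eigenvector ψ of H with eigenvalue in an interval Δ, and there is a constant C > 0 such that ⟨ψ, i[H,A]ψ⟩ ≥ C‖ψ‖² for all such eigenvectors ψ, then H has no eigenvalues in Δ. -/
import Mathlib


local notation "⟪" x ", " y "⟫" => @inner ℂ _ _ x y

/- STATEMENT 3: Consequence of the Virial theorem (Mourre-type absence of eigenvalues):
if H (symmetric, modeled on its domain D) and A bounded self-adjoint are such that
for every eigenvector ψ of H with eigenvalue in the interval Δ one has Aψ ∈ D and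
⟨ψ, i[H,A]ψ⟩ ≥ C‖ψ‖² with C > 0, then H has no eigenvalues in Δ. -/
theorem no_eigenvalues_of_positive_commutator
    {E : Type*} [NormedAddCommGroup E] [InnerProductSpace ℂ E] [CompleteSpace E]
    (D : Submodule ℂ E) (T : D →ₗ[ℂ] E)
    (hsym : ∀ f g : D, ⟪T f, (g : E)⟫ = ⟪(f : E), T g⟫)
    (A : E →L[ℂ] E) (hA : IsSelfAdjoint A)
    (Δ : Set ℝ) (C : ℝ) (hC : 0 < C)
    (hpos : ∀ E₀ ∈ Δ, ∀ ψ : D, ψ ≠ 0 → T ψ = (E₀ : ℂ) • (ψ : E) →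
      A (ψ : E) ∈ D ∧
      C * ‖(ψ : E)‖ ^ 2 ≤ (Complex.I * (⟪T ψ, A (ψ : E)⟫ - ⟪A (ψ : E), T ψ⟫)).re) :
    ¬ ∃ E₀ ∈ Δ, ∃ ψ : D, ψ ≠ 0 ∧ T ψ = (E₀ : ℂ) • (ψ : E) := by
  rintro ⟨E₀, hE₀, ψ, hψ, hT⟩
  obtain ⟨-, hineq⟩ := hpos E₀ hE₀ ψ hψ hT
  -- virial: commutator vanishes on eigenvector
  have hAsym : ⟪(ψ : E), A (ψ : E)⟫ = ⟪A (ψ : E), (ψ : E)⟫ := by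
    have := hA.isSymmetric (ψ : E) (ψ : E)
    exact this.symm
  have hcomm : ⟪T ψ, A (ψ : E)⟫ - ⟪A (ψ : E), T ψ⟫ = 0 := by
    rw [hT, inner_smul_left, inner_smul_right, Complex.conj_ofReal, hAsym]
    ring
  rw [hcomm] at hineq
  simp only [mul_zero, Complex.zero_re] at hineq
  have hnorm : 0 < ‖(ψ : E)‖ := by
    have : (ψ : E) ≠ 0 := fun h => hψ (Subtype.ext h)
    exact norm_pos_iff.mpr this
  nlinarith [mul_pos hC (pow_pos hnorm 2)]
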